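/- Let ℓ ≥ 1 be an integer. If a bipartite graph G with parts U and V contains no cycle of length at most 4ℓ+2, then G contains no subdivision pattern of C_{2ℓ+1} of the following kind: there do not exist vertices u₁,...,u_k ∈ U and a decomposition of the edge set of C_{2ℓ+1} into bipartite subgraphs H₁,...,H_k with pairwise at most one common vertex, such that u_i is adjacent in G to (images of) all vertices of H_i. In particular, the 1-subdivision of C_{2ℓ+1}, which is the cycle C_{4ℓ+2}, is not a subgraph of G. -/

import Mathlib

/-!
Each edge `{x, x + 1}` of the odd cycle lies in some bipartite `Hᵢ`, say `H_{I x}`. An odd cycle is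
not bipartite, so `I` is not constant along the cycle: `I x₀ ≠ I (x₀ + 1)` for some `x₀`. Walking
`φ (x₀ + 1), u (I (x₀ + 1)), φ (x₀ + 2), …` once around the cycle gives a closed walk of length
`4ℓ + 2` in `G` whose first edge is never traversed again (`φ` is injective, `U` and `V` are
disjoint, and `u (I x₀) ≠ u (I (x₀ + 1))`), so `G` has a cycle of length at most `4ℓ + 2`.
-/

open Fin.NatCast Fin.CommRing

namespace SimpleGraph

variable {V : Type*} {G : SimpleGraph V}

theorem exists_isCycle_length_le_of_notMem_edges {u v : V} (h : G.Adj u v) (p : G.Walk v u)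
    (hp : s(u, v) ∉ p.edges) : ∃ (w : V) (c : G.Walk w w), c.IsCycle ∧ c.length ≤ p.length + 1 := by
  classical
  exact ⟨u, .cons h p.bypass,
    (Walk.cons_isCycle_iff _ h).mpr ⟨p.bypass_isPath, fun he => hp (p.edges_bypass_subset_edges he)⟩,
    by simpa using p.length_bypass_le_length⟩

theorem exists_walk_of_adj_succ (g : ℕ → V) (n : ℕ) (hadj : ∀ j < n, G.Adj (g j) (g (j + 1))) :
    ∃ p : G.Walk (g 0) (g n), p.length = n ∧ ∀ e ∈ p.edges, ∃ j < n, e = s(g j, g (j + 1)) := by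
  induction n with
  | zero => exact ⟨.nil, rfl, by simp⟩
  | succ n ih =>
    obtain ⟨p, hlen, hedges⟩ := ih fun j hj => hadj j (by omega)
    refine ⟨p.concat (hadj n n.lt_succ_self), by simp [hlen], fun e he => ?_⟩
    rw [Walk.edges_concat, List.concat_eq_append, List.mem_append, List.mem_singleton] at he
    rcases he with he | rfl
    · obtain ⟨j, hj, rfl⟩ := hedges e he
      exact ⟨j, by omega, rfl⟩
    · exact ⟨n, n.lt_succ_self, rfl⟩

theorem exists_isCycle_length_le_of_closed_seq (g : ℕ → V) {n : ℕ} (hn : 0 < n)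
    (hadj : ∀ j < n, G.Adj (g j) (g (j + 1))) (hclosed : g n = g 0)
    (hfirst : ∀ j, 0 < j → j < n → s(g j, g (j + 1)) ≠ s(g 0, g 1)) :
    ∃ (v : V) (c : G.Walk v v), c.IsCycle ∧ c.length ≤ n := by
  obtain ⟨p, hlen, hedges⟩ := exists_walk_of_adj_succ (fun j => g (j + 1)) (n - 1)
    fun j hj => hadj (j + 1) (by omega)
  have hend : g (n - 1 + 1) = g 0 := by rw [Nat.sub_add_cancel hn, hclosed]
  obtain ⟨v, c, hc, hclen⟩ := exists_isCycle_length_le_of_notMem_edges (hadj 0 hn) (p.copy rfl hend)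
    fun he => by
      obtain ⟨j, hj, hje⟩ := hedges _ (by simpa using he)
      exact hfirst (j + 1) (by omega) (by omega) hje.symm
  exact ⟨v, c, hc, by simp only [Walk.length_copy] at hclen; omega⟩

theorem cycleGraph_adj_add_one {n : ℕ} [NeZero n] (hn : 2 ≤ n) (x : Fin n) :
    (cycleGraph n).Adj x (x + 1) := by
  obtain ⟨m, rfl⟩ : ∃ m, n = m + 2 := ⟨n - 2, by omega⟩
  simp [cycleGraph_adj]

theorem eq_add_one_or_of_cycleGraph_adj {n : ℕ} [NeZero n] {x y : Fin n}
    (h : (cycleGraph n).Adj x y) : y = x + 1 ∨ x = y + 1 := by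
  obtain ⟨m, rfl⟩ : ∃ m, n = m + 1 := ⟨n - 1, by have := NeZero.pos n; omega⟩
  rw [cycleGraph_eq_circulantGraph, circulantGraph_adj] at h
  rcases h.2 with h | h
  · exact Or.inr (sub_eq_iff_eq_add'.mp h)
  · exact Or.inl (sub_eq_iff_eq_add'.mp h)

theorem not_colorable_two_cycleGraph {n : ℕ} (hn : 2 < n) (hodd : Odd n) :
    ¬ (cycleGraph n).Colorable 2 := fun hcol => by
  obtain ⟨v, c, -, hc⟩ := (cycleGraph_isContained_iff hn).mp (IsContained.refl _)
  exact Nat.not_even_iff_odd.mpr hodd (hc ▸ two_colorable_iff_forall_loop_even.mp hcol v c)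

theorem exists_ne_add_one_of_forall_colorable_two {n : ℕ} [NeZero n] (hn : 2 < n) (hodd : Odd n)
    {ι : Type*} {H : ι → SimpleGraph (Fin n)} (hcol : ∀ i, (H i).Colorable 2) (I : Fin n → ι)
    (hI : ∀ x, (H (I x)).Adj x (x + 1)) : ∃ x, I x ≠ I (x + 1) := by
  by_contra! hconst
  have hI₀ (x : Fin n) : I x = I 0 := by
    rw [← Fin.cast_val_eq_self x]
    induction x.val with
    | zero => simp
    | succ k ih => rw [Nat.cast_succ, ← hconst, ih]
  have hcycle : cycleGraph n ≤ H (I 0) := fun x y hxy => by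
    rcases eq_add_one_or_of_cycleGraph_adj hxy with rfl | rfl
    · simpa [hI₀] using hI x
    · simpa [hI₀] using (hI y).symm
  exact not_colorable_two_cycleGraph hn hodd ((hcol (I 0)).mono_left hcycle)

theorem exists_isCycle_length_le_of_zigzag {m : ℕ} [NeZero m] {φ a : Fin m → V}
    (hφ : φ.Injective) (hne : ∀ x y, a x ≠ φ y) (hadj : ∀ x, G.Adj (φ x) (a x))
    (hadj' : ∀ x, G.Adj (a x) (φ (x + 1))) {x₀ : Fin m} (hx₀ : a x₀ ≠ a (x₀ + 1)) :
    ∃ (v : V) (c : G.Walk v v), c.IsCycle ∧ c.length ≤ 2 * m := by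
  set g : ℕ → V := ((fun i : ℕ => φ (x₀ + 1 + i)) ⋈ fun i : ℕ => a (x₀ + 1 + i)).get
  have heven (i : ℕ) : g (2 * i) = φ (x₀ + 1 + i) := Stream'.get_interleave_left i _ _
  have hodd (i : ℕ) : g (2 * i + 1) = a (x₀ + 1 + i) := Stream'.get_interleave_right i _ _
  have hsucc (i : ℕ) : 2 * i + 1 + 1 = 2 * (i + 1) := by ring
  have hg₀ : g 0 = φ (x₀ + 1) := by simpa using heven 0
  have hg₁ : g 1 = a (x₀ + 1) := by simpa using hodd 0
  refine exists_isCycle_length_le_of_closed_seq g (by positivity [NeZero.pos m]) ?_ ?_ ?_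
  · intro j _
    obtain ⟨i, rfl | rfl⟩ := Nat.even_or_odd' j
    · rw [heven, hodd]
      exact hadj _
    · rw [hodd, hsucc, heven, Nat.cast_succ, ← add_assoc]
      exact hadj' _
  · simp [heven, hg₀]
  · intro j hj₀ hjm
    rw [hg₀, hg₁]
    obtain ⟨i, rfl | rfl⟩ := Nat.even_or_odd' j
    · rw [heven, hodd, Ne, Sym2.eq_iff]
      rintro (⟨h, -⟩ | ⟨h, -⟩)
      · have hi : (i : Fin m) = 0 := by simpa using hφ h
        have := Nat.le_of_dvd (by omega) (Fin.natCast_eq_zero.mp hi)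
        omega
      · exact hne _ _ h.symm
    · rw [hodd, hsucc, heven, Ne, Sym2.eq_iff]
      rintro (⟨h, -⟩ | ⟨h, h'⟩)
      · exact hne _ _ h
      · have hi : (i : Fin m) + 1 = 0 := by simpa [add_assoc] using hφ h'
        have hx : x₀ + 1 + i = x₀ := by rw [add_assoc, add_comm 1, hi, add_zero]
        rw [hx] at h
        exact hx₀ h

end SimpleGraph

open SimpleGraph

theorem stmt_19_general {W : Type*} (ℓ : ℕ) (hℓ : 1 ≤ ℓ) (G : SimpleGraph W) (U V : Set W)
    (hdisj : Disjoint U V)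
    (hgirth : ∀ (w : W) (c : G.Walk w w), c.IsCycle → 4 * ℓ + 2 < c.length) :
    (¬ ∃ (k : ℕ) (u : Fin k → W) (Hs : Fin k → SimpleGraph (Fin (2 * ℓ + 1)))
        (φ : Fin (2 * ℓ + 1) → W),
          Function.Injective u ∧ (∀ i, u i ∈ U) ∧
          Function.Injective φ ∧ (∀ x, φ x ∈ V) ∧
          (∀ i, Hs i ≤ SimpleGraph.cycleGraph (2 * ℓ + 1)) ∧
          (∀ i, ∃ e, e ∈ (Hs i).edgeSet) ∧
          (∀ i, (Hs i).Colorable 2) ∧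
          (∀ e ∈ (SimpleGraph.cycleGraph (2 * ℓ + 1)).edgeSet,
            ∃! i : Fin k, e ∈ (Hs i).edgeSet) ∧
          (∀ i j, i ≠ j → Set.Subsingleton ((Hs i).support ∩ (Hs j).support)) ∧
          (∀ i x, x ∈ (Hs i).support → G.Adj (u i) (φ x))) ∧
      (¬ ∃ f : Fin (4 * ℓ + 2) → W, Function.Injective f ∧
        ∀ a b, (SimpleGraph.cycleGraph (4 * ℓ + 2)).Adj a b → G.Adj (f a) (f b)) := by
  constructor
  · rintro ⟨k, u, Hs, φ, hu, huU, hφ, hφV, -, -, hcol, hpart, -, hjoin⟩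
    choose I hI using fun x : Fin (2 * ℓ + 1) =>
      (hpart s(x, x + 1) (cycleGraph_adj_add_one (by omega) x)).exists
    obtain ⟨x₀, hx₀⟩ :=
      exists_ne_add_one_of_forall_colorable_two (by omega) (odd_two_mul_add_one ℓ) hcol I hI
    obtain ⟨v, c, hc, hlen⟩ := exists_isCycle_length_le_of_zigzag (a := u ∘ I) hφ
      (fun x y h => hdisj.ne_of_mem (huU _) (hφV y) h)
      (fun x => (hjoin _ _ ((hI x).mem_support_left)).symm)
      (fun x => hjoin _ _ ((hI x).mem_support_right)) (hu.ne hx₀)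
    have := hgirth v c hc
    omega
  · rintro ⟨f, hf, hfadj⟩
    obtain ⟨v, c, hc, hlen⟩ :=
      (cycleGraph_isContained_iff (by omega)).mp ⟨⟨⟨f, hfadj _ _⟩, hf⟩⟩
    exact (hgirth v c hc).ne' hlen

/-- A bipartite graph of girth greater than `4ℓ+2` is `L(C_{2ℓ+1})`-free (the
observation used in Theorem 3 of the paper): it contains no copy of any graph
`J(H₁,…,H_k)` arising from a decomposition of the edges of `C_{2ℓ+1}` into
edge-disjoint bipartite subgraphs `H₁,…,H_k`, each containing an edge and pairwise
sharing at most one vertex, where the vertex `uᵢ ∈ U` is joined to (the images of)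
all vertices of `Hᵢ`. In particular, the 1-subdivision of `C_{2ℓ+1}`, which is the
cycle `C_{4ℓ+2}`, is not a subgraph of `G`. -/
theorem stmt_19 {W : Type*} (ℓ : ℕ) (hℓ : 1 ≤ ℓ) (G : SimpleGraph W) (U V : Set W)
    (hdisj : Disjoint U V) (hcover : U ∪ V = Set.univ)
    (hbip : ∀ x y, G.Adj x y → (x ∈ U ∧ y ∈ V) ∨ (x ∈ V ∧ y ∈ U))
    (hgirth : ∀ (w : W) (c : G.Walk w w), c.IsCycle → 4 * ℓ + 2 < c.length) :
    (¬ ∃ (k : ℕ) (u : Fin k → W) (Hs : Fin k → SimpleGraph (Fin (2 * ℓ + 1)))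
        (φ : Fin (2 * ℓ + 1) → W),
          Function.Injective u ∧ (∀ i, u i ∈ U) ∧
          Function.Injective φ ∧ (∀ x, φ x ∈ V) ∧
          (∀ i, Hs i ≤ SimpleGraph.cycleGraph (2 * ℓ + 1)) ∧
          (∀ i, ∃ e, e ∈ (Hs i).edgeSet) ∧
          (∀ i, (Hs i).Colorable 2) ∧
          (∀ e ∈ (SimpleGraph.cycleGraph (2 * ℓ + 1)).edgeSet,
            ∃! i : Fin k, e ∈ (Hs i).edgeSet) ∧
          (∀ i j, i ≠ j → Set.Subsingleton ((Hs i).support ∩ (Hs j).support)) ∧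
          (∀ i x, x ∈ (Hs i).support → G.Adj (u i) (φ x))) ∧
      (¬ ∃ f : Fin (4 * ℓ + 2) → W, Function.Injective f ∧
        ∀ a b, (SimpleGraph.cycleGraph (4 * ℓ + 2)).Adj a b → G.Adj (f a) (f b)) :=
  stmt_19_general ℓ hℓ G U V hdisj hgirth
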